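/- arXiv:1504.00578 — 2 statements merged into one kernel-verified Lean document; each statement's English description precedes it below -/
import Mathlib

section
/- Let (G,p) be a framework with projected Gram matrix X = V^T P P^T V (P^T e = 0, V^T e = 0, V^T V = I). Exactly one of the following holds: (1) there exists y ∈ R^{m̄} with X + Σ_{{i,j} missing} y_ij M^{ij} positive definite, where M^{ij} = -½ V^T E^{ij} V; (2) there exists a nonzero PSD matrix Y of order n-1 with XY = 0 and trace(Y M^{ij}) = 0 for all missing edges {i,j}. -/
/-!
If `X + ∑ y_q M_q ≻ 0` and `Y ⪰ 0`, `Y ≠ 0`, then `trace ((X + ∑ y_q M_q) Y) > 0`, whereas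
`X Y = 0` and `trace (Y M_q) = 0` make it vanish; so the alternatives exclude each other.
If no `y` exists, the affine space `X + span M` misses the open convex cone of positive definite
matrices. Hahn–Banach separates them by a functional `A ↦ -trace (Y A)` with `Y` symmetric that
is negative on the cone and nonnegative on `X + span M`. Hence `Y ⪰ 0` (positive
semidefinite matrices are limits of positive definite ones), `Y ≠ 0`, `trace (Y M_q) = 0` and
`trace (Y X) ≤ 0`. Since `X ⪰ 0`, also `trace (X Y) ≥ 0`, and writing `X = Aᴴ A`, `Y = Bᴴ B`
shows that `trace (X Y) = ‖B Aᴴ‖²` vanishes only if `X Y = 0`.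
-/

open Matrix BigOperators

/-- `E^{ij}`: the symmetric matrix with 1's in entries `(i,j)` and `(j,i)`, 0 elsewhere. -/
def Eij {n : ℕ} (i j : Fin n) : Matrix (Fin n) (Fin n) ℝ :=
  Matrix.single i j 1 + Matrix.single j i 1

open Filter Topology
open scoped ComplexOrder MatrixOrder

theorem nonpos_and_nonneg_of_forall_pos_mul_lt {a s : ℝ} (h : ∀ t > 0, t * a < s) :
    a ≤ 0 ∧ 0 ≤ s := by
  constructor
  · by_contra! ha
    have := h ((|s| + 1) / a) (by positivity)
    rw [div_mul_cancel₀ _ ha.ne'] at this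
    linarith [le_abs_self s]
  · by_contra! hs
    have ha : a < 0 := by linarith [h 1 one_pos]
    have := h (s / (2 * a)) (div_pos_of_neg_of_neg hs (by linarith))
    rw [div_mul_eq_mul_div, mul_div_mul_right _ _ ha.ne] at this
    linarith

theorem eq_zero_of_forall_le_add_mul {a b s : ℝ} (h : ∀ t, s ≤ b + t * a) : a = 0 := by
  by_contra ha
  have := h ((s - 1 - b) / a)
  rw [div_mul_cancel₀ _ ha] at this
  linarith

theorem exists_strongDual_neg_on_cone_of_disjoint_affine {E : Type*} [AddCommGroup E]
    [Module ℝ E] [TopologicalSpace E] [IsTopologicalAddGroup E] [ContinuousSMul ℝ E]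
    {C : Set E} (hCo : IsOpen C) (hCc : Convex ℝ C) (hCne : C.Nonempty)
    (hcone : ∀ t : ℝ, 0 < t → ∀ u ∈ C, t • u ∈ C) (x₀ : E) (L : Submodule ℝ E)
    (hdisj : ∀ v ∈ L, x₀ + v ∉ C) :
    ∃ f : StrongDual ℝ E, (∀ u ∈ C, f u < 0) ∧ 0 ≤ f x₀ ∧ ∀ v ∈ L, f v = 0 := by
  obtain ⟨f, s, hfC, hfS⟩ := geometric_hahn_banach_open hCc hCo (L.convex.translate x₀)
    (Set.disjoint_left.mpr fun _ hu ⟨v, hv, hvu⟩ => hdisj v hv (by rwa [← hvu] at hu))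
  have hS : ∀ v ∈ L, s ≤ f x₀ + f v := fun v hv => by
    simpa using hfS (x₀ + v) ⟨v, hv, rfl⟩
  have hsx₀ : s ≤ f x₀ := by simpa using hS 0 L.zero_mem
  have hscale : ∀ u ∈ C, f u ≤ 0 ∧ 0 ≤ s := fun u hu =>
    nonpos_and_nonneg_of_forall_pos_mul_lt fun t ht => by
      simpa using hfC (t • u) (hcone t ht u hu)
  refine ⟨f, fun u hu => ?_, (hscale _ hCne.some_mem).2.trans hsx₀, fun v hv =>
    eq_zero_of_forall_le_add_mul fun t => by simpa using hS (t • v) (L.smul_mem t hv)⟩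
  · -- a small step from `u` towards `x₀`, where `f` is larger, stays in `C`, where `f ≤ 0`
    have hmove : ∀ᶠ δ in 𝓝[>] (0 : ℝ), u + δ • (x₀ - u) ∈ C :=
      nhdsWithin_le_nhds <| (Continuous.tendsto (by fun_prop) (0 : ℝ)).eventually
        (hCo.mem_nhds (by simpa using hu))
    obtain ⟨δ, hδC, hδ⟩ := (hmove.and self_mem_nhdsWithin).exists
    have := (hscale _ hδC).1
    simp only [map_add, map_smul, map_sub, smul_eq_mul] at this
    nlinarith [hfC u hu, (hδ : (0 : ℝ) < δ)]

namespace Matrix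

section Trace

variable {ι 𝕜 : Type*} [Fintype ι] [RCLike 𝕜] {A B : Matrix ι ι 𝕜}

theorem PosSemidef.exists_trace_mul_eq_trace_conjTranspose_mul_self (hA : A.PosSemidef)
    (hB : B.PosSemidef) :
    ∃ C : Matrix ι ι 𝕜, (A * B).trace = (Cᴴ * C).trace ∧ (C = 0 → A * B = 0) := by
  classical
  obtain ⟨a, rfl⟩ := CStarAlgebra.nonneg_iff_eq_star_mul_self.mp hA.nonneg
  obtain ⟨b, rfl⟩ := CStarAlgebra.nonneg_iff_eq_star_mul_self.mp hB.nonneg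
  simp only [star_eq_conjTranspose]
  refine ⟨b * aᴴ, ?_, fun h => ?_⟩
  · rw [conjTranspose_mul, conjTranspose_conjTranspose, Matrix.mul_assoc, trace_mul_comm,
      Matrix.mul_assoc, Matrix.mul_assoc, Matrix.mul_assoc]
  · have : a * bᴴ = 0 := by simpa using congrArg (·ᴴ) h
    rw [Matrix.mul_assoc, ← Matrix.mul_assoc a, this]; simp

theorem PosSemidef.trace_mul_nonneg (hA : A.PosSemidef) (hB : B.PosSemidef) :
    0 ≤ (A * B).trace := by
  obtain ⟨C, hC, -⟩ := hA.exists_trace_mul_eq_trace_conjTranspose_mul_self hB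
  exact hC ▸ (posSemidef_conjTranspose_mul_self C).trace_nonneg

theorem PosSemidef.mul_eq_zero_of_trace_mul_eq_zero (hA : A.PosSemidef) (hB : B.PosSemidef)
    (h : (A * B).trace = 0) : A * B = 0 := by
  obtain ⟨C, hC, hC0⟩ := hA.exists_trace_mul_eq_trace_conjTranspose_mul_self hB
  exact hC0 (trace_conjTranspose_mul_self_eq_zero_iff.mp (hC ▸ h))

theorem PosDef.trace_mul_pos (hA : A.PosDef) (hB : B.PosSemidef) (hB0 : B ≠ 0) :
    0 < (A * B).trace := by
  classical
  refine (hA.posSemidef.trace_mul_nonneg hB).lt_of_ne fun h => hB0 ?_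
  have hAB := hA.posSemidef.mul_eq_zero_of_trace_mul_eq_zero hB h.symm
  simpa [← Matrix.mul_assoc, Matrix.nonsing_inv_mul _ ((isUnit_iff_isUnit_det A).mp hA.isUnit)]
    using congrArg (A⁻¹ * ·) hAB

theorem exists_trace_mul_eq {R : Type*} [CommSemiring R] [DecidableEq ι]
    (f : Matrix ι ι R →ₗ[R] R) : ∃ Z : Matrix ι ι R, ∀ A, (Z * A).trace = f A := by
  refine ⟨of fun i j => f (single j i 1), fun A => ?_⟩
  induction A using Matrix.induction_on' with
  | h_zero => simp
  | h_add A B hA hB => simp [Matrix.mul_add, hA, hB]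
  | h_std_basis i j c =>
    rw [show single i j c = c • single i j 1 by rw [smul_single, smul_eq_mul, mul_one],
      map_smul, Matrix.mul_smul, trace_smul, trace_mul_single]
    simp

theorem exists_isHermitian_trace_mul_eq (f : Matrix ι ι ℝ →ₗ[ℝ] ℝ) :
    ∃ Y : Matrix ι ι ℝ, Y.IsHermitian ∧ ∀ A, A.IsHermitian → (Y * A).trace = f A := by
  classical
  obtain ⟨Z, hZ⟩ := exists_trace_mul_eq f
  refine ⟨(2⁻¹ : ℝ) • (Z + Zᵀ), ?_, fun A hA => ?_⟩
  · simpa using ((isSymm_add_transpose_self Z).smul (2⁻¹ : ℝ))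
  · have hZt : (Zᵀ * A).trace = (Z * A).trace := by
      rw [← trace_transpose, transpose_mul, transpose_transpose,
        (isHermitian_iff_isSymm.mp hA).eq, trace_mul_comm]
    rw [smul_mul, Matrix.add_mul, trace_smul, trace_add, hZt, hZ, smul_eq_mul]
    ring

theorem posSemidef_of_forall_trace_mul_nonneg {Y : Matrix ι ι 𝕜} (hY : Y.IsHermitian)
    (h : ∀ P : Matrix ι ι 𝕜, P.PosSemidef → 0 ≤ (Y * P).trace) : Y.PosSemidef :=
  .of_dotProduct_mulVec_nonneg hY fun x => by
    simpa [mul_vecMulVec, trace_vecMulVec, dotProduct_comm] using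
      h _ (posSemidef_vecMulVec_self_star x)

end Trace

variable (ι : Type*) [Fintype ι]

/-- Unlike `PosDef`, membership does not require symmetry, which makes this set open. -/
def positiveQuadraticCone : Set (Matrix ι ι ℝ) := {A | ∀ x ≠ 0, 0 < x ⬝ᵥ A *ᵥ x}

variable {ι}

theorem isOpen_positiveQuadraticCone : IsOpen (positiveQuadraticCone ι) := by
  have hsphere : positiveQuadraticCone ι =
      {A | ∀ x ∈ Metric.sphere (0 : ι → ℝ) 1, 0 < x ⬝ᵥ A *ᵥ x} := by
    ext A
    refine ⟨fun hA x hx => hA x (ne_zero_of_mem_unit_sphere ⟨x, hx⟩), fun hA x hx => ?_⟩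
    have hx' : 0 < ‖x‖ := norm_pos_iff.mpr hx
    have := hA (‖x‖⁻¹ • x) (by simp [norm_smul, hx'.ne'])
    simp only [mulVec_smul, dotProduct_smul, smul_dotProduct, smul_eq_mul] at this
    exact pos_of_mul_pos_right (pos_of_mul_pos_right this (by positivity)) (by positivity)
  rw [hsphere, isOpen_iff_eventually]
  exact fun A hA => (isCompact_sphere 0 1).eventually_forall_of_forall_eventually fun x hx =>
    (Continuous.tendsto (by fun_prop) (A, x)).eventually (lt_mem_nhds (hA x hx))

theorem convex_positiveQuadraticCone : Convex ℝ (positiveQuadraticCone ι) := by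
  simp only [positiveQuadraticCone, Set.ofPred_forall]
  exact convex_iInter fun x => convex_iInter fun _ => convex_halfSpace_gt
    ⟨fun A B => by simp [add_mulVec], fun c A => by simp [smul_mulVec]⟩ 0

theorem smul_mem_positiveQuadraticCone {t : ℝ} (ht : 0 < t) {A : Matrix ι ι ℝ}
    (hA : A ∈ positiveQuadraticCone ι) : t • A ∈ positiveQuadraticCone ι := fun x hx => by
  simpa [smul_mulVec] using mul_pos ht (hA x hx)

theorem posDef_iff_isHermitian_and_mem_positiveQuadraticCone {A : Matrix ι ι ℝ} :
    A.PosDef ↔ A.IsHermitian ∧ A ∈ positiveQuadraticCone ι := by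
  simp [posDef_iff_dotProduct_mulVec, positiveQuadraticCone]

theorem PosSemidef.mem_closure_positiveQuadraticCone [DecidableEq ι] {P : Matrix ι ι ℝ}
    (hP : P.PosSemidef) : P ∈ closure (positiveQuadraticCone ι) := by
  refine mem_closure_of_tendsto (f := fun ε : ℝ => P + ε • 1) (b := 𝓝[>] 0) ?_ ?_
  · refine Tendsto.mono_left ?_ nhdsWithin_le_nhds
    simpa using
      (Continuous.tendsto (f := fun ε : ℝ => P + ε • (1 : Matrix ι ι ℝ)) (by fun_prop) 0)
  · filter_upwards [self_mem_nhdsWithin] with ε hε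
    exact (posDef_iff_isHermitian_and_mem_positiveQuadraticCone.mp
      (PosDef.posSemidef_add hP (PosDef.one.smul hε))).2

theorem exists_posSemidef_trace_mul_nonpos_of_forall_not_posDef {X : Matrix ι ι ℝ}
    (hX : X.IsHermitian) {L : Submodule ℝ (Matrix ι ι ℝ)} (hL : ∀ A ∈ L, A.IsHermitian)
    (h : ∀ A ∈ L, ¬(X + A).PosDef) :
    ∃ Y : Matrix ι ι ℝ, Y.PosSemidef ∧ Y ≠ 0 ∧ (Y * X).trace ≤ 0 ∧
      ∀ A ∈ L, (Y * A).trace = 0 := by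
  classical
  have hone : (1 : Matrix ι ι ℝ) ∈ positiveQuadraticCone ι :=
    (posDef_iff_isHermitian_and_mem_positiveQuadraticCone.mp PosDef.one).2
  obtain ⟨f, hfC, hfX, hfL⟩ := exists_strongDual_neg_on_cone_of_disjoint_affine
    isOpen_positiveQuadraticCone convex_positiveQuadraticCone ⟨1, hone⟩
    (fun _ ht _ hA => smul_mem_positiveQuadraticCone ht hA) X L fun A hA hXA =>
      h A hA (posDef_iff_isHermitian_and_mem_positiveQuadraticCone.mpr ⟨hX.add (hL A hA), hXA⟩)
  obtain ⟨Y, hY, hYf⟩ := exists_isHermitian_trace_mul_eq (-f.toLinearMap)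
  have hf_nonpos : ∀ P : Matrix ι ι ℝ, P.PosSemidef → f P ≤ 0 := fun P hP =>
    closure_minimal (fun A hA => (hfC A hA).le) (isClosed_le f.continuous continuous_const)
      hP.mem_closure_positiveQuadraticCone
  refine ⟨Y, posSemidef_of_forall_trace_mul_nonneg hY fun P hP => ?_, ?_, ?_, fun A hA => ?_⟩
  · simpa [hYf P hP.isHermitian] using hf_nonpos P hP
  · rintro rfl
    have hf1 : f 1 = 0 := by simpa using hYf 1 isHermitian_one
    exact (hfC 1 hone).ne hf1
  · simpa [hYf X hX] using hfX
  · simp [hYf A (hL A hA), hfL A hA]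

theorem xor_exists_posDef_add_sum_smul_exists_posSemidef {κ : Type*} [Fintype κ]
    {X : Matrix ι ι ℝ} (hX : X.PosSemidef) {M : κ → Matrix ι ι ℝ}
    (hM : ∀ q, (M q).IsHermitian) :
    Xor (∃ y : κ → ℝ, (X + ∑ q, y q • M q).PosDef)
      (∃ Y : Matrix ι ι ℝ, Y.PosSemidef ∧ Y ≠ 0 ∧ X * Y = 0 ∧
        ∀ q, (Y * M q).trace = 0) := by
  rw [xor_iff_iff_not]
  constructor
  · rintro ⟨y, hy⟩ ⟨Y, hY, hY0, hXY, hYM⟩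
    have := hy.trace_mul_pos hY hY0
    simp [Matrix.add_mul, Finset.sum_mul, hXY, trace_sum, trace_mul_comm (M _) Y, hYM] at this
  · intro hnY
    by_contra! hnA
    have hL : ∀ A ∈ Submodule.span ℝ (Set.range M), A.IsHermitian := fun A hA =>
      IsSelfAdjoint.isHermitian <| (Submodule.span_le (p := selfAdjoint.submodule ℝ _)).mpr
        (Set.range_subset_iff.mpr fun q => (hM q).isSelfAdjoint) hA
    obtain ⟨Y, hY, hY0, hYX, hYL⟩ :=
      exists_posSemidef_trace_mul_nonpos_of_forall_not_posDef hX.isHermitian hL fun A hA => by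
        obtain ⟨y, rfl⟩ := (Submodule.mem_span_range_iff_exists_fun ℝ).mp hA
        exact hnA y
    have hXY : X * Y = 0 := hX.mul_eq_zero_of_trace_mul_eq_zero hY <|
      le_antisymm (trace_mul_comm X Y ▸ hYX) (hX.trace_mul_nonneg hY)
    exact hnY ⟨Y, hY, hY0, hXY, fun q => hYL _ (Submodule.subset_span ⟨q, rfl⟩)⟩

end Matrix

theorem isHermitian_Eij {n : ℕ} (i j : Fin n) : (Eij i j).IsHermitian := by
  simp [Eij, IsHermitian, add_comm]

theorem stmt13_general (n r : ℕ) (G : SimpleGraph (Fin n)) [DecidableRel G.Adj]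
    (P : Matrix (Fin n) (Fin r) ℝ)
    (V : Matrix (Fin n) (Fin (n - 1)) ℝ)
    (X : Matrix (Fin (n - 1)) (Fin (n - 1)) ℝ) (hX : X = Vᵀ * P * Pᵀ * V)
    (M : {q : Fin n × Fin n // q.1 < q.2 ∧ ¬ G.Adj q.1 q.2} →
        Matrix (Fin (n - 1)) (Fin (n - 1)) ℝ)
    (hM : ∀ q, M q = (-(1/2) : ℝ) • (Vᵀ * Eij q.1.1 q.1.2 * V)) :
    Xor'
      (∃ y : {q : Fin n × Fin n // q.1 < q.2 ∧ ¬ G.Adj q.1 q.2} → ℝ,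
        (X + ∑ q, y q • M q).PosDef)
      (∃ Y : Matrix (Fin (n - 1)) (Fin (n - 1)) ℝ, Y.PosSemidef ∧ Y ≠ 0 ∧
        X * Y = 0 ∧ ∀ q, (Y * M q).trace = 0) := by
  have hXpsd : X.PosSemidef := by
    simpa [hX, Matrix.mul_assoc] using posSemidef_self_mul_conjTranspose (Vᵀ * P)
  have hMherm : ∀ q, (M q).IsHermitian := fun q => by
    simpa [hM q] using (isHermitian_conjTranspose_mul_mul V (isHermitian_Eij q.1.1 q.1.2)).smul
      (IsSelfAdjoint.all (-(1 / 2) : ℝ))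
  exact xor_exists_posDef_add_sum_smul_exists_posSemidef hXpsd hMherm

/-- For a framework `(G,p)` with projected Gram matrix `X = Vᵀ P Pᵀ V`, exactly one
of the following holds: (1) `X + Σ y_ij M^{ij} ≻ 0` for some `y`; (2) there is a
nonzero PSD `Y` with `XY = 0` and `trace(Y M^{ij}) = 0` for all missing edges. -/
theorem stmt13 (n r : ℕ) (G : SimpleGraph (Fin n)) [DecidableRel G.Adj]
    (P : Matrix (Fin n) (Fin r) ℝ) (hPe : Pᵀ *ᵥ (fun _ => (1 : ℝ)) = 0)
    (V : Matrix (Fin n) (Fin (n - 1)) ℝ)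
    (hVe : Vᵀ *ᵥ (fun _ => (1 : ℝ)) = 0) (hVV : Vᵀ * V = 1)
    (X : Matrix (Fin (n - 1)) (Fin (n - 1)) ℝ) (hX : X = Vᵀ * P * Pᵀ * V)
    (M : {q : Fin n × Fin n // q.1 < q.2 ∧ ¬ G.Adj q.1 q.2} →
        Matrix (Fin (n - 1)) (Fin (n - 1)) ℝ)
    (hM : ∀ q, M q = (-(1/2) : ℝ) • (Vᵀ * Eij q.1.1 q.1.2 * V)) :
    Xor'
      (∃ y : {q : Fin n × Fin n // q.1 < q.2 ∧ ¬ G.Adj q.1 q.2} → ℝ,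
        (X + ∑ q, y q • M q).PosDef)
      (∃ Y : Matrix (Fin (n - 1)) (Fin (n - 1)) ℝ, Y.PosSemidef ∧ Y ≠ 0 ∧
        X * Y = 0 ∧ ∀ q, (Y * M q).trace = 0) :=
  stmt13_general n r G P V X hX M hM
end

section
/- Let (G,p) be an r-dimensional framework on n vertices, r ≤ n-2, admitting a nonzero positive semidefinite stress matrix Ω. If y = 0 is the only vector y ∈ R^{m̄} satisfying Ω (Σ_{{i,j} missing} y_ij E^{ij}) = 0, then (G,p) is universally rigid; that is, every framework (G,q) with ||q^i - q^j|| = ||p^i - p^j|| for all edges {i,j} of G satisfies ||q^i - q^j|| = ||p^i - p^j|| for all pairs i,j. -/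
/-!
Let `Q` have the same edge lengths as `P` and let `D` be the difference of their squared distance
matrices. `D` vanishes on the edges and the diagonal, while the stress `Ω` vanishes off them, so
`Ω * D` has zero diagonal. Since `Ω e = 0` and `Ω P = 0`, `tr (Ω D) = -2 tr (Qᵀ Ω Q)`, which forces
`Ω Q = 0` because `Ω` is positive semidefinite. Then `Ω D = (Ω w) eᵀ` for a vector `w`, so `Ω D` has
constant rows, and its zero diagonal gives `Ω D = 0`. Finally `D = Σ D_ij E^{ij}` over the missing
edges, and the uniqueness hypothesis gives `D = 0`.
-/

open Matrix BigOperators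

open scoped ComplexOrder MatrixOrder in
lemma Matrix.PosSemidef.mul_eq_zero_of_trace_eq_zero {𝕜 n m : Type*} [RCLike 𝕜] [Fintype n]
    [Fintype m] {A : Matrix n n 𝕜} (hA : A.PosSemidef) {X : Matrix n m 𝕜}
    (h : (Xᴴ * A * X).trace = 0) : A * X = 0 := by
  classical
  obtain ⟨B, rfl⟩ := CStarAlgebra.nonneg_iff_eq_star_mul_self.mp hA.nonneg
  have hB : B * X = 0 := by
    rw [← trace_conjTranspose_mul_self_eq_zero_iff, ← h, conjTranspose_mul]
    simp only [star_eq_conjTranspose, Matrix.mul_assoc]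
  rw [Matrix.mul_assoc, hB, Matrix.mul_zero]

section SquaredDistances

variable {m ι : Type*} [Fintype ι]

def sqDist (X : Matrix m ι ℝ) : Matrix m m ℝ :=
  of fun i j => ∑ t, (X i t - X j t) ^ 2

lemma sqDist_isSymm (X : Matrix m ι ℝ) : (sqDist X).IsSymm := by
  ext i j
  exact Finset.sum_congr rfl fun t _ => by ring

@[simp]
lemma sqDist_apply_self (X : Matrix m ι ℝ) (i : m) : sqDist X i i = 0 := by
  simp [sqDist]

lemma sqDist_eq (X : Matrix m ι ℝ) :
    sqDist X = vecMulVec (diag (X * Xᵀ)) 1 + vecMulVec 1 (diag (X * Xᵀ)) - 2 • (X * Xᵀ) := by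
  ext i j
  simp only [sqDist, of_apply, Matrix.sub_apply, Matrix.add_apply, Matrix.smul_apply,
    vecMulVec_apply, diag_apply, mul_apply, transpose_apply, Pi.one_apply, mul_one, one_mul,
    nsmul_eq_mul, Finset.mul_sum, ← Finset.sum_add_distrib, ← Finset.sum_sub_distrib]
  exact Finset.sum_congr rfl fun t _ => by push_cast; ring

variable [Fintype m] {Ω : Matrix m m ℝ}

lemma mul_sqDist (hΩ : Ω *ᵥ 1 = 0) (X : Matrix m ι ℝ) :
    Ω * sqDist X = vecMulVec (Ω *ᵥ diag (X * Xᵀ)) 1 - 2 • (Ω * X * Xᵀ) := by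
  rw [sqDist_eq, Matrix.mul_sub, Matrix.mul_add, mul_vecMulVec, mul_vecMulVec, hΩ,
    zero_vecMulVec, add_zero, Matrix.mul_smul, Matrix.mul_assoc]

lemma trace_mul_sqDist (hΩs : Ω.IsSymm) (hΩ : Ω *ᵥ 1 = 0) (X : Matrix m ι ℝ) :
    trace (Ω * sqDist X) = -2 * trace (Xᵀ * Ω * X) := by
  have hrow : (Ω *ᵥ diag (X * Xᵀ)) ⬝ᵥ 1 = 0 := by
    rw [dotProduct_comm, dotProduct_mulVec, ← hΩs.eq, vecMul_transpose, hΩ, zero_dotProduct]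
  rw [mul_sqDist hΩ, trace_sub, trace_vecMulVec, hrow, trace_smul, trace_mul_comm (Ω * X),
    ← Matrix.mul_assoc]
  simp only [nsmul_eq_mul, Nat.cast_ofNat, zero_sub, neg_mul]

lemma mul_sqDist_of_mul_eq_zero (hΩ : Ω *ᵥ 1 = 0) {X : Matrix m ι ℝ} (hΩX : Ω * X = 0) :
    Ω * sqDist X = vecMulVec (Ω *ᵥ diag (X * Xᵀ)) 1 := by
  rw [mul_sqDist hΩ, hΩX, Matrix.zero_mul, smul_zero, sub_zero]

variable {κ : Type*} [Fintype κ] {P : Matrix m κ ℝ} {Q : Matrix m ι ℝ}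

lemma mul_eq_zero_of_trace_mul_sqDist_sub (hΩpsd : Ω.PosSemidef) (hΩs : Ω.IsSymm)
    (hΩ : Ω *ᵥ 1 = 0) (hΩP : Ω * P = 0) (h : trace (Ω * (sqDist Q - sqDist P)) = 0) :
    Ω * Q = 0 := by
  refine hΩpsd.mul_eq_zero_of_trace_eq_zero ?_
  rw [Matrix.mul_sub, trace_sub, trace_mul_sqDist hΩs hΩ, trace_mul_sqDist hΩs hΩ,
    Matrix.mul_assoc Pᵀ, hΩP, Matrix.mul_zero, trace_zero] at h
  rw [conjTranspose_eq_transpose_of_trivial]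
  linarith

lemma mul_sqDist_sub_eq_zero (hΩ : Ω *ᵥ 1 = 0) (hΩP : Ω * P = 0) (hΩQ : Ω * Q = 0)
    (hdiag : diag (Ω * (sqDist Q - sqDist P)) = 0) : Ω * (sqDist Q - sqDist P) = 0 := by
  rw [Matrix.mul_sub, mul_sqDist_of_mul_eq_zero hΩ hΩQ, mul_sqDist_of_mul_eq_zero hΩ hΩP,
    ← sub_vecMulVec, ← mulVec_sub] at hdiag ⊢
  ext i j
  simpa using congr_fun hdiag i

end SquaredDistances

lemma diag_mul_eq_zero_of_adj {V : Type*} [Fintype V] (G : SimpleGraph V)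
    {Ω D : Matrix V V ℝ} (hΩ : ∀ i j, i ≠ j → ¬ G.Adj i j → Ω i j = 0)
    (hdiag : ∀ i, D i i = 0) (hadj : ∀ i j, G.Adj i j → D i j = 0) : diag (Ω * D) = 0 := by
  ext i
  rw [diag_apply, mul_apply]
  refine Finset.sum_eq_zero fun k _ => ?_
  by_cases hik : i = k
  · rw [hik, hdiag, mul_zero]
  by_cases hG : G.Adj i k
  · rw [hadj k i hG.symm, mul_zero]
  · rw [hΩ i k hik hG, zero_mul]

lemma Eij_apply {n : ℕ} (a b i j : Fin n) :
    Eij a b i j = (if (a, b) = (i, j) then 1 else 0) + (if (a, b) = (j, i) then 1 else 0) := by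
  simp [Eij, single_apply, Prod.ext_iff, and_comm]

lemma sum_nonAdj_smul_Eij {n : ℕ} (G : SimpleGraph (Fin n)) [DecidableRel G.Adj]
    {M : Matrix (Fin n) (Fin n) ℝ} (hM : M.IsSymm) (hdiag : ∀ i, M i i = 0)
    (hadj : ∀ i j, G.Adj i j → M i j = 0) :
    ∑ q : {q : Fin n × Fin n // q.1 < q.2 ∧ ¬ G.Adj q.1 q.2}, M q.1.1 q.1.2 • Eij q.1.1 q.1.2 =
      M := by
  ext i j
  rw [← Finset.sum_subtype _ (fun _ => Finset.mem_filter_univ _)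
    (fun q : Fin n × Fin n => M q.1 q.2 • Eij q.1 q.2)]
  simp only [Matrix.sum_apply, Matrix.smul_apply, Eij_apply, smul_eq_mul, mul_add, mul_ite,
    mul_one, mul_zero, Finset.sum_add_distrib, Finset.sum_ite_eq', Finset.mem_filter_univ]
  have hji : M j i = M i j := hM.apply i j
  by_cases hij : G.Adj i j
  · simp [hadj i j hij, hji]
  have hji' : ¬G.Adj j i := fun h => hij h.symm
  rcases lt_trichotomy i j with h | rfl | h
  · simp [h, h.not_gt, hij]
  · simp [hdiag]
  · simp [h, h.not_gt, hji', hji]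

theorem stmt19_general (n r : ℕ) (G : SimpleGraph (Fin n)) [DecidableRel G.Adj]
    (P : Matrix (Fin n) (Fin r) ℝ)
    (Ω : Matrix (Fin n) (Fin n) ℝ)
    (hΩsym : Ω.IsSymm) (hΩP : Ω * P = 0) (hΩe : Ω *ᵥ (fun _ => (1 : ℝ)) = 0)
    (hΩmiss : ∀ i j, i ≠ j → ¬ G.Adj i j → Ω i j = 0)
    (hΩpsd : Ω.PosSemidef)
    (huniq : ∀ y : {q : Fin n × Fin n // q.1 < q.2 ∧ ¬ G.Adj q.1 q.2} → ℝ,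
      Ω * (∑ q, y q • Eij q.1.1 q.1.2) = 0 → y = 0) :
    ∀ (k : ℕ) (Q : Matrix (Fin n) (Fin k) ℝ),
      (∀ i j, G.Adj i j →
        ∑ t, (Q i t - Q j t) ^ 2 = ∑ t, (P i t - P j t) ^ 2) →
      ∀ i j, ∑ t, (Q i t - Q j t) ^ 2 = ∑ t, (P i t - P j t) ^ 2 := by
  intro k Q hQ
  have hD_symm := (sqDist_isSymm Q).sub (sqDist_isSymm P)
  have hD_diag : ∀ i, (sqDist Q - sqDist P) i i = 0 := by simp
  have hD_adj : ∀ i j, G.Adj i j → (sqDist Q - sqDist P) i j = 0 := fun i j h => by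
    simp [sqDist, hQ i j h]
  have hdiag := diag_mul_eq_zero_of_adj G hΩmiss hD_diag hD_adj
  have hΩQ : Ω * Q = 0 := mul_eq_zero_of_trace_mul_sqDist_sub hΩpsd hΩsym hΩe hΩP <| by
    rw [trace, hdiag, Pi.zero_def, Finset.sum_const_zero]
  have hD_decomp := sum_nonAdj_smul_Eij G hD_symm hD_diag hD_adj
  have hy := huniq _ <| hD_decomp ▸ mul_sqDist_sub_eq_zero hΩe hΩP hΩQ hdiag
  have hD : sqDist Q - sqDist P = 0 := by
    rw [← hD_decomp]
    exact Finset.sum_eq_zero fun q _ => by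
      rw [show (sqDist Q - sqDist P) q.1.1 q.1.2 = 0 from congr_fun hy q, zero_smul]
  intro i j
  simpa [sqDist, sub_eq_zero] using congr_fun (congr_fun hD i) j

/-- If an `r`-dimensional framework `(G,p)` on `n` vertices admits a nonzero PSD
stress matrix `Ω` such that `y = 0` is the only solution of
`Ω (Σ_{missing} y_ij E^{ij}) = 0`, then `(G,p)` is universally rigid: every
framework `(G,q)` (in any Euclidean space) whose edge lengths agree with those of
`(G,p)` has all pairwise distances equal to those of `(G,p)`. -/
theorem stmt19 (n r : ℕ) (hr : r + 2 ≤ n) (G : SimpleGraph (Fin n)) [DecidableRel G.Adj]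
    (hGconn : G.Connected) (hGnc : G ≠ ⊤)
    (P : Matrix (Fin n) (Fin r) ℝ)
    (hPe : Pᵀ *ᵥ (fun _ => (1 : ℝ)) = 0) (hPrank : P.rank = r)
    (Ω : Matrix (Fin n) (Fin n) ℝ)
    (hΩsym : Ω.IsSymm) (hΩP : Ω * P = 0) (hΩe : Ω *ᵥ (fun _ => (1 : ℝ)) = 0)
    (hΩmiss : ∀ i j, i ≠ j → ¬ G.Adj i j → Ω i j = 0)
    (hΩpsd : Ω.PosSemidef) (hΩne : Ω ≠ 0)
    (huniq : ∀ y : {q : Fin n × Fin n // q.1 < q.2 ∧ ¬ G.Adj q.1 q.2} → ℝ,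
      Ω * (∑ q, y q • Eij q.1.1 q.1.2) = 0 → y = 0) :
    ∀ (k : ℕ) (Q : Matrix (Fin n) (Fin k) ℝ),
      (∀ i j, G.Adj i j →
        ∑ t, (Q i t - Q j t) ^ 2 = ∑ t, (P i t - P j t) ^ 2) →
      ∀ i j, ∑ t, (Q i t - Q j t) ^ 2 = ∑ t, (P i t - P j t) ^ 2 :=
  stmt19_general n r G P Ω hΩsym hΩP hΩe hΩmiss hΩpsd huniq
end
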